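/- For the grey counter streams a, b defined by a(0)=false, b(0)=false, a(n+1) = ¬reset(n+1) ∧ ¬b(n), b(n+1) = ¬reset(n+1) ∧ a(n), and the integer counter stream time defined by time(0)=0, time(n+1) = if reset(n+1) ∨ time(n)=3 then 0 else time(n)+1, the outputs agree at every instant: (a(n) ∧ b(n)) = (time(n) = 2) for all n. -/
import Mathlib


theorem two_counters_observer (reset : ℕ → Bool) (a b : ℕ → Bool) (time : ℕ → ℤ)
    (ha0 : a 0 = false) (hb0 : b 0 = false)
    (ha : ∀ n, a (n + 1) = (!(reset (n + 1)) && !(b n)))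
    (hb : ∀ n, b (n + 1) = (!(reset (n + 1)) && a n))
    (ht0 : time 0 = 0)
    (ht : ∀ n, time (n + 1) =
      if reset (n + 1) = true ∨ time n = 3 then 0 else time n + 1) :
    ∀ n, (a n = true ∧ b n = true) ↔ time n = 2 := by
  have key : ∀ n, (a n = (time n = 1 ∨ time n = 2)) ∧
      (b n = (time n = 2 ∨ time n = 3)) ∧ (time n = 0 ∨ time n = 1 ∨ time n = 2 ∨ time n = 3) := by
    intro n
    induction n with
    | zero => simp [ha0, hb0, ht0]
    | succ k ih =>
      obtain ⟨ia, ib, it⟩ := ih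
      rw [ha k, hb k, ht k]
      cases hr : reset (k + 1) <;> rcases it with h | h | h | h <;>
        simp_all <;> omega
  intro n
  obtain ⟨ia, ib, it⟩ := key n
  rw [ia, ib]
  constructor
  · rintro ⟨h1, h2⟩; omega
  · intro h; exact ⟨Or.inr h, Or.inl h⟩
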